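/- For every integer n ≥ 1, the function q_{n+1,n} is nondecreasing on the nonnegative integers: for all integers h, h' with 0 ≤ h ≤ h', one has q_{n+1,n}(h) ≤ q_{n+1,n}(h') in ℤ ∪ {+∞}. -/

import Mathlib

/-! On `(0, ⌊n²/2⌋]` the function `q_{n,n}` is `n² + 2⌈h/2⌉ - 2p` on the block of index `p`,
and the block index decreases as `h` grows, so `q_{n,n}` is nondecreasing there.
`q_{n+1,n}` is `q_{n,n} + n - 1` except for a dip of `2` at the first point `2pq + 1` of a
block; there the block index has just dropped by at least one, which pays for the dip.
Finally `⌊n²/2⌋ = 2⌈n/2⌉⌊n/2⌋` is the top of the block `p = ⌈n/2⌉`, and from it the linear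
tail `⌊n²/2⌋ + 2h - 1` starts above `q_{n+1,n}(⌊n²/2⌋)`. Monotonicity then follows from
comparing consecutive values. -/

open Classical in
/-- The quantum lower bound function `q_{n,n}` for the Khovanov homology of `T(n,n)`:
`+∞` outside `[0, ⌊n²/2⌋]`, `n² - 2n` at `h = 0`, and `n² + 2⌈h/2⌉ - 2p` for
`2(p+1)(q-1) < h ≤ 2pq` where `p ≥ q ≥ 1`, `p + q = n` (with `q = n - p`). -/
noncomputable def qnn (n h : ℤ) : WithTop ℤ :=
  if h < 0 ∨ n ^ 2 / 2 < h then ⊤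
  else if h = 0 then ((n ^ 2 - 2 * n : ℤ) : WithTop ℤ)
  else if hc : ∃ p : ℤ, n - p ≤ p ∧ 1 ≤ n - p ∧
      2 * (p + 1) * (n - p - 1) < h ∧ h ≤ 2 * p * (n - p)
    then ((n ^ 2 + 2 * ((h + 1) / 2) - 2 * hc.choose : ℤ) : WithTop ℤ)
  else ⊤

open Classical in
/-- The quantum lower bound function `q_{n+1,n}` for the Khovanov homology of `T(n+1,n)`:
`+∞` outside `[0, ⌊n²/2⌋ + ⌊n/2⌋]`; `q_{n,n}(h) + n - 3` at `h = 2pq + 1 ≤ ⌊n²/2⌋`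
(`p ≥ q ≥ 1`, `p + q = n`); `q_{n,n}(h) + n - 1` at other `h` with `0 ≤ h ≤ ⌊n²/2⌋`;
and `⌊n²/2⌋ + 2h - 1` for `⌊n²/2⌋ ≤ h ≤ ⌊n²/2⌋ + ⌊n/2⌋`. -/
noncomputable def qn1n (n h : ℤ) : WithTop ℤ :=
  if h < 0 ∨ n ^ 2 / 2 + n / 2 < h then ⊤
  else if ∃ p : ℤ, n - p ≤ p ∧ 1 ≤ n - p ∧ h = 2 * p * (n - p) + 1 ∧ h ≤ n ^ 2 / 2
    then qnn n h + ((n - 3 : ℤ) : WithTop ℤ)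
  else if h ≤ n ^ 2 / 2 then qnn n h + ((n - 1 : ℤ) : WithTop ℤ)
  else ((n ^ 2 / 2 + 2 * h - 1 : ℤ) : WithTop ℤ)

theorem Int.exists_switch_of_le {P : ℤ → Prop} {a b : ℤ} (hab : a ≤ b) (ha : P a) (hb : ¬ P b) :
    ∃ p, a ≤ p ∧ p < b ∧ P p ∧ ¬ P (p + 1) := by
  induction b, hab using Int.leInduction with
  | base => exact absurd ha hb
  | succ b hab ih =>
    by_cases hPb : P b
    · exact ⟨b, hab, lt_add_one b, hPb, hb⟩
    · obtain ⟨p, hap, hpb, hp, hp1⟩ := ih hPb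
      exact ⟨p, hap, hpb.trans (lt_add_one b), hp, hp1⟩

lemma two_mul_mul_sub_le_of_le {n p p' : ℤ} (hpp' : p ≤ p') (hn : n ≤ p + p') :
    2 * p' * (n - p') ≤ 2 * p * (n - p) := by
  nlinarith [mul_nonneg (sub_nonneg.2 hpp') (sub_nonneg.2 hn)]

lemma half_sq_eq (n : ℤ) : n ^ 2 / 2 = 2 * ((n + 1) / 2) * (n - (n + 1) / 2) := by
  obtain ⟨k, rfl | rfl⟩ := Int.even_or_odd' n
  · rw [show (2 * k + 1) / 2 = k by omega, show (2 * k) ^ 2 = 2 * (2 * k * k) by ring,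
      Int.mul_ediv_cancel_left _ two_ne_zero]
    ring
  · rw [show (2 * k + 1 + 1) / 2 = k + 1 by omega,
      show (2 * k + 1) ^ 2 = 2 * (2 * (k * k + k)) + 1 by ring,
      show 2 * (k + 1) * (2 * k + 1 - (k + 1)) = 2 * (k * k + k) by ring]
    omega

/-- `h` lies in the block `(2(p+1)(q-1), 2pq]` of `q_{n,n}`, where `q = n - p`. -/
abbrev IsBlock (n h p : ℤ) : Prop :=
  n - p ≤ p ∧ 1 ≤ n - p ∧ 2 * (p + 1) * (n - p - 1) < h ∧ h ≤ 2 * p * (n - p)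

namespace IsBlock

variable {n h h' p p' : ℤ}

lemma pos (hp : IsBlock n h p) : 0 < h := by
  obtain ⟨hp₁, hq, hlo, -⟩ := hp
  nlinarith [mul_nonneg (by omega : (0 : ℤ) ≤ p + 1) (by omega : (0 : ℤ) ≤ n - p - 1)]

lemma le_half_sq (hp : IsBlock n h p) : h ≤ n ^ 2 / 2 := by
  obtain ⟨-, -, -, hhi⟩ := hp
  have : 2 * (2 * p * (n - p)) ≤ n ^ 2 := by nlinarith [sq_nonneg (n - 2 * p)]
  omega

lemma lt_of_two_mul_mul_sub_lt (hp' : IsBlock n h' p') (hp : n - p ≤ p)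
    (hh : 2 * p * (n - p) < h') : p' < p := by
  by_contra! hle
  have := two_mul_mul_sub_le_of_le (n := n) hle (by omega)
  have := hp'.2.2.2
  omega

lemma antitone (hp : IsBlock n h p) (hp' : IsBlock n h' p') (hh : h ≤ h') : p' ≤ p := by
  obtain ⟨hp₁, hq, hlo, -⟩ := hp
  refine Int.lt_add_one_iff.1 (hp'.lt_of_two_mul_mul_sub_lt (by omega) ?_)
  rw [← sub_sub]
  omega

lemma unique (hp : IsBlock n h p) (hp' : IsBlock n h p') : p = p' :=
  le_antisymm (hp'.antitone hp le_rfl) (hp.antitone hp' le_rfl)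

end IsBlock

lemma isBlock_two_mul_mul_sub {n p : ℤ} (hp : n - p ≤ p) (hq : 1 ≤ n - p) :
    IsBlock n (2 * p * (n - p)) p :=
  ⟨hp, hq, by nlinarith, le_rfl⟩

lemma exists_isBlock {n h : ℤ} (hn : 1 ≤ n) (h0 : 0 < h) (hN : h ≤ n ^ 2 / 2) :
    ∃ p, IsBlock n h p := by
  obtain ⟨p, hp₀, hpn, hhi, hlo⟩ := Int.exists_switch_of_le (P := fun p => h ≤ 2 * p * (n - p))
    (a := (n + 1) / 2) (b := n) (by omega) (by rwa [← half_sq_eq]) (by rw [sub_self, mul_zero, not_le]; exact h0)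
  refine ⟨p, by omega, by omega, ?_, hhi⟩
  linarith [not_le.1 hlo, show 2 * (p + 1) * (n - (p + 1)) = 2 * (p + 1) * (n - p - 1) by ring]

lemma qnn_zero (n : ℤ) : qnn n 0 = ((n ^ 2 - 2 * n : ℤ) : WithTop ℤ) := by
  rw [qnn, if_neg (by have := sq_nonneg n; omega), if_pos rfl]

lemma qnn_eq_of_isBlock {n h p : ℤ} (hp : IsBlock n h p) :
    qnn n h = ((n ^ 2 + 2 * ((h + 1) / 2) - 2 * p : ℤ) : WithTop ℤ) := by
  have hex : ∃ p, IsBlock n h p := ⟨p, hp⟩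
  rw [qnn, if_neg (by have := hp.pos; have := hp.le_half_sq; omega), if_neg hp.pos.ne',
    dif_pos hex, hex.choose_spec.unique hp]

lemma qnn_le_qnn_add_one {n h : ℤ} (hn : 1 ≤ n) (h0 : 0 ≤ h) (hN : h + 1 ≤ n ^ 2 / 2) :
    qnn n h ≤ qnn n (h + 1) := by
  obtain ⟨p', hp'⟩ := exists_isBlock hn (by omega) hN
  rw [qnn_eq_of_isBlock hp']
  rcases h0.eq_or_lt with rfl | hpos
  · rw [qnn_zero, WithTop.coe_le_coe]
    have := hp'.2.1
    omega
  · obtain ⟨p, hp⟩ := exists_isBlock hn hpos (by omega)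
    rw [qnn_eq_of_isBlock hp, WithTop.coe_le_coe]
    have := hp.antitone hp' (by omega)
    omega

/-- The points `h = 2pq + 1 ≤ ⌊n²/2⌋` at which `q_{n+1,n}` is `q_{n,n} + n - 3`
rather than `q_{n,n} + n - 1`. -/
abbrev IsDip (n h : ℤ) : Prop :=
  ∃ p : ℤ, n - p ≤ p ∧ 1 ≤ n - p ∧ h = 2 * p * (n - p) + 1 ∧ h ≤ n ^ 2 / 2

lemma not_isDip_of_even {n h : ℤ} (he : Even h) : ¬ IsDip n h := by
  rintro ⟨p, -, -, rfl, -⟩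
  exact Int.not_even_iff_odd.2 ⟨p * (n - p), by ring⟩ he

section qn1n

variable {n h : ℤ}

lemma qn1n_of_isDip (hd : IsDip n h) : qn1n n h = qnn n h + ((n - 3 : ℤ) : WithTop ℤ) := by
  obtain ⟨p, hp, hq, rfl, hN⟩ := id hd
  have := mul_pos (by omega : 0 < 2 * p) (by omega : 0 < n - p)
  rw [qn1n, if_neg (by omega), if_pos hd]

lemma qn1n_of_not_isDip (hn : 0 ≤ n) (h0 : 0 ≤ h) (hN : h ≤ n ^ 2 / 2) (hd : ¬ IsDip n h) :
    qn1n n h = qnn n h + ((n - 1 : ℤ) : WithTop ℤ) := by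
  rw [qn1n, if_neg (by omega), if_neg hd, if_pos hN]

lemma qn1n_le_qnn_add (hn : 0 ≤ n) (h0 : 0 ≤ h) (hN : h ≤ n ^ 2 / 2) :
    qn1n n h ≤ qnn n h + ((n - 1 : ℤ) : WithTop ℤ) := by
  by_cases hd : IsDip n h
  · rw [qn1n_of_isDip hd]
    gcongr
    exact WithTop.coe_le_coe.2 (by omega)
  · rw [qn1n_of_not_isDip hn h0 hN hd]

lemma qn1n_of_half_sq_lt (hN : n ^ 2 / 2 < h) (hh : h ≤ n ^ 2 / 2 + n / 2) :
    qn1n n h = ((n ^ 2 / 2 + 2 * h - 1 : ℤ) : WithTop ℤ) := by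
  have := sq_nonneg n
  rw [qn1n, if_neg (by omega), if_neg (fun ⟨_, _, _, _, h'⟩ => by omega), if_neg (by omega)]

lemma qn1n_of_lt (hh : n ^ 2 / 2 + n / 2 < h) : qn1n n h = ⊤ := by
  rw [qn1n, if_pos (Or.inr hh)]

lemma qn1n_le_qn1n_add_one_of_isDip (hd : IsDip n (h + 1)) : qn1n n h ≤ qn1n n (h + 1) := by
  obtain ⟨p, hp, hq, hh, hN⟩ := id hd
  obtain rfl : h = 2 * p * (n - p) := by omega
  have hblock := isBlock_two_mul_mul_sub hp hq
  obtain ⟨p', hp'⟩ := exists_isBlock (by omega) (by have := hblock.pos; omega) hN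
  have hlt := hp'.lt_of_two_mul_mul_sub_lt hp (lt_add_one _)
  rw [qn1n_of_not_isDip (by omega) hblock.pos.le (by omega)
      (not_isDip_of_even ((even_two_mul p).mul_right _)), qn1n_of_isDip hd,
    qnn_eq_of_isBlock hblock, qnn_eq_of_isBlock hp', ← WithTop.coe_add, ← WithTop.coe_add,
    WithTop.coe_le_coe]
  omega

lemma qn1n_le_qn1n_add_one_of_lt_half_sq (hn : 1 ≤ n) (h0 : 0 ≤ h) (hN : h + 1 ≤ n ^ 2 / 2) :
    qn1n n h ≤ qn1n n (h + 1) := by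
  by_cases hd : IsDip n (h + 1)
  · exact qn1n_le_qn1n_add_one_of_isDip hd
  calc qn1n n h ≤ qnn n h + ((n - 1 : ℤ) : WithTop ℤ) := qn1n_le_qnn_add (by omega) h0 (by omega)
    _ ≤ qnn n (h + 1) + ((n - 1 : ℤ) : WithTop ℤ) := by gcongr; exact qnn_le_qnn_add_one hn h0 hN
    _ = qn1n n (h + 1) := (qn1n_of_not_isDip (by omega) (by omega) hN hd).symm

lemma qn1n_half_sq_le_qn1n_add_one (hn : 2 ≤ n) :
    qn1n n (n ^ 2 / 2) ≤ qn1n n (n ^ 2 / 2 + 1) := by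
  have hN := half_sq_eq n
  have hblock : IsBlock n (n ^ 2 / 2) ((n + 1) / 2) :=
    hN ▸ isBlock_two_mul_mul_sub (by omega) (by omega)
  have heven : Even (n ^ 2 / 2) := hN ▸ (even_two_mul _).mul_right _
  rw [qn1n_of_not_isDip (by omega) hblock.pos.le le_rfl (not_isDip_of_even heven),
    qn1n_of_half_sq_lt (lt_add_one _) (by omega), qnn_eq_of_isBlock hblock, ← WithTop.coe_add,
    WithTop.coe_le_coe]
  have := heven.two_dvd
  omega

lemma qn1n_le_qn1n_add_one (hn : 1 ≤ n) (h0 : 0 ≤ h) : qn1n n h ≤ qn1n n (h + 1) := by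
  rcases lt_or_ge (n ^ 2 / 2 + n / 2) (h + 1) with htop | hle
  · rw [qn1n_of_lt htop]
    exact le_top
  rcases lt_trichotomy (h + 1) (n ^ 2 / 2 + 1) with hlt | heq | hgt
  · exact qn1n_le_qn1n_add_one_of_lt_half_sq hn h0 (by omega)
  · obtain rfl : h = n ^ 2 / 2 := by omega
    exact qn1n_half_sq_le_qn1n_add_one (by omega)
  · rw [qn1n_of_half_sq_lt (by omega) (by omega), qn1n_of_half_sq_lt (by omega) hle,
      WithTop.coe_le_coe]
    omega

end qn1n

/-- For `n ≥ 1`, the function `q_(n+1,n)` is nondecreasing on the nonnegative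
integers. -/
theorem qn1n_monotone (n : ℤ) (hn : 1 ≤ n) (h h' : ℤ) (h0 : 0 ≤ h) (hle : h ≤ h') :
    qn1n n h ≤ qn1n n h' := by
  induction h', hle using Int.leInduction with
  | base => exact le_rfl
  | succ k hk ih => exact ih.trans (qn1n_le_qn1n_add_one hn (h0.trans hk))
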